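/- Let φ(x) := min{f(x,y) : g(y) ≤ 0}, where f : ℝ^n × ℝ^m → ℝ and g : ℝ^m → ℝ^p are convex and continuously differentiable. Let (x̄,ȳ) ∈ ℝ^n × ℝ^m be such that φ(x̄) < ∞ and the set-valued mapping M(u) := {y ∈ ℝ^m : g(y) + u ≤ 0} is calm at (0,ȳ) (in particular g(ȳ) ≤ 0). Then the constraint qualification (CQ-S) holds at (x̄,ȳ), i.e.: whenever (x*,0) ∈ r∂(f−φ)(x̄,ȳ) + ∂⟨u,ϑ₂⟩(x̄,ȳ) with r ≥ 0 and u ∈ N_{Λ₂}(g(ȳ)), one has x* = 0; here Θ₂ := ℝ^n × ℝ^m, Λ₂ := ℝ^p₋ = {z ∈ ℝ^p : z ≤ 0}, ϑ₂(x,y) := g(y). -/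

import Mathlib

open Filter Topology Pointwise

noncomputable section

/-- Euclidean projector: set of nearest points of `x` in `Θ`. -/
def projSet {E : Type*} [NormedAddCommGroup E] (Θ : Set E) (x : E) : Set E :=
  {w | w ∈ Θ ∧ dist x w = Metric.infDist x Θ}

/-- Basic (limiting, Mordukhovich) normal cone. -/
def limNC {E : Type*} [NormedAddCommGroup E] [NormedSpace ℝ E] (Θ : Set E) (x₀ : E) : Set E :=
  {v | ∃ x w : ℕ → E, ∃ a : ℕ → ℝ,
    (∀ j, w j ∈ projSet Θ (x j)) ∧ (∀ j, 0 ≤ a j) ∧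
    Tendsto x atTop (𝓝 x₀) ∧ Tendsto (fun j => a j • (x j - w j)) atTop (𝓝 v)}

/-- `ℓ²` pairing of two points. -/
def l2pair {E F : Type*} (x : E) (y : F) : WithLp 2 (E × F) :=
  (WithLp.equiv 2 (E × F)).symm (x, y)

def l2fst {E F : Type*} (z : WithLp 2 (E × F)) : E := ((WithLp.equiv 2 (E × F)) z).1
def l2snd {E F : Type*} (z : WithLp 2 (E × F)) : F := ((WithLp.equiv 2 (E × F)) z).2

/-- Basic (limiting) subdifferential of a real-valued function via epigraph normals. -/
def limSD {E : Type*} [NormedAddCommGroup E] [NormedSpace ℝ E] (ψ : E → ℝ) (x₀ : E) : Set E :=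
  {ξ | l2pair ξ (-1 : ℝ) ∈
    limNC {z : WithLp 2 (E × ℝ) | ψ (l2fst z) ≤ l2snd z} (l2pair x₀ (ψ x₀))}

/-- Clarke generalized gradient (of a locally Lipschitz function). -/
def clarkeSD {E : Type*} [NormedAddCommGroup E] [NormedSpace ℝ E] (ψ : E → ℝ) (x₀ : E) : Set E :=
  convexHull ℝ (limSD ψ x₀)

/-- Convex subdifferential. -/
def convexSD {E : Type*} [NormedAddCommGroup E] [InnerProductSpace ℝ E] (ψ : E → ℝ) (x₀ : E) :
    Set E :=
  {ξ | ∀ x, ψ x₀ + inner ℝ ξ (x - x₀) ≤ ψ x}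

/-- Coderivative of a set-valued map at a graph point. -/
def coderiv {E F : Type*} [NormedAddCommGroup E] [NormedSpace ℝ E]
    [NormedAddCommGroup F] [NormedSpace ℝ F]
    (Ψ : E → Set F) (x₀ : E) (y₀ : F) (ys : F) : Set E :=
  {xs | l2pair xs (-ys) ∈ limNC {z : WithLp 2 (E × F) | l2snd z ∈ Ψ (l2fst z)} (l2pair x₀ y₀)}

/-- Calmness of a set-valued map at a point of its graph. -/
def CalmAt {A B : Type*} [NormedAddCommGroup A] [NormedAddCommGroup B]
    (Ψ : A → Set B) (a₀ : A) (b₀ : B) : Prop :=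
  b₀ ∈ Ψ a₀ ∧ ∃ U ∈ 𝓝 a₀, ∃ V ∈ 𝓝 b₀, ∃ ℓ : ℝ, 0 ≤ ℓ ∧
    ∀ a ∈ U, ∀ b ∈ Ψ a ∩ V, ∃ b' ∈ Ψ a₀, dist b b' ≤ ℓ * dist a a₀

/-- Inner semicompactness of a set-valued map at a point. -/
def InnerSemicompactAt {A B : Type*} [TopologicalSpace A] [TopologicalSpace B]
    (Ψ : A → Set B) (x₀ : A) : Prop :=
  (Ψ x₀).Nonempty ∧ ∀ x : ℕ → A, Tendsto x atTop (𝓝 x₀) → (∀ j, (Ψ (x j)).Nonempty) →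
    ∃ y : ℕ → B, (∀ j, y j ∈ Ψ (x j)) ∧
      ∃ σ : ℕ → ℕ, StrictMono σ ∧ ∃ y₀ : B, Tendsto (y ∘ σ) atTop (𝓝 y₀)

/-- Inner semicontinuity of a set-valued map at a point of its graph. -/
def InnerSemicontAt {A B : Type*} [TopologicalSpace A] [TopologicalSpace B]
    (Ψ : A → Set B) (x₀ : A) (y₀ : B) : Prop :=
  y₀ ∈ Ψ x₀ ∧ ∀ x : ℕ → A, Tendsto x atTop (𝓝 x₀) →
    ∃ y : ℕ → B, (∀ j, y j ∈ Ψ (x j)) ∧ Tendsto y atTop (𝓝 y₀)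

/-- Lipschitz continuity on a neighborhood of a point. -/
def LipschitzAroundPt {A B : Type*} [PseudoMetricSpace A] [PseudoMetricSpace B]
    (ψ : A → B) (x₀ : A) : Prop :=
  ∃ c : NNReal, ∃ U ∈ 𝓝 x₀, LipschitzOnWith c ψ U

abbrev Euc (n : ℕ) := EuclideanSpace ℝ (Fin n)
abbrev PairSp (n m : ℕ) := WithLp 2 (Euc n × Euc m)

/-- The nonpositive orthant `ℝ^p₋`. -/
def negOrth (p : ℕ) : Set (Euc p) := {z | ∀ i, z i ≤ 0}

variable {n m p k : ℕ}

/-- Lower-level feasible set mapping `K`. -/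
def Kmap (Θ₂ : Set (PairSp n m)) (ϑ₂ : PairSp n m → Euc p) (Λ₂ : Set (Euc p)) (x : Euc n) :
    Set (Euc m) :=
  {y | l2pair x y ∈ Θ₂ ∧ ϑ₂ (l2pair x y) ∈ Λ₂}

/-- Lower-level optimal value function `φ`. -/
def lowVal (f : PairSp n m → ℝ) (Θ₂ : Set (PairSp n m)) (ϑ₂ : PairSp n m → Euc p)
    (Λ₂ : Set (Euc p)) (x : Euc n) : ℝ :=
  sInf ((fun y => f (l2pair x y)) '' Kmap Θ₂ ϑ₂ Λ₂ x)

/-- Lower-level solution map `S`. -/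
def Smap (f : PairSp n m → ℝ) (Θ₂ : Set (PairSp n m)) (ϑ₂ : PairSp n m → Euc p)
    (Λ₂ : Set (Euc p)) (x : Euc n) : Set (Euc m) :=
  {y | y ∈ Kmap Θ₂ ϑ₂ Λ₂ x ∧ ∀ y' ∈ Kmap Θ₂ ϑ₂ Λ₂ x, f (l2pair x y) ≤ f (l2pair x y')}

/-- Two-level (optimistic) value function `φ∘`. -/
def upVal (F f : PairSp n m → ℝ) (Θ₂ : Set (PairSp n m)) (ϑ₂ : PairSp n m → Euc p)
    (Λ₂ : Set (Euc p)) (x : Euc n) : ℝ :=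
  sInf ((fun y => F (l2pair x y)) '' Smap f Θ₂ ϑ₂ Λ₂ x)

/-- Optimistic solution map `S∘`. -/
def Somap (F f : PairSp n m → ℝ) (Θ₂ : Set (PairSp n m)) (ϑ₂ : PairSp n m → Euc p)
    (Λ₂ : Set (Euc p)) (x : Euc n) : Set (Euc m) :=
  {y | y ∈ Smap f Θ₂ ϑ₂ Λ₂ x ∧ F (l2pair x y) ≤ upVal F f Θ₂ ϑ₂ Λ₂ x}

/-- `φ_p^o(x) = min{-F(x,y) : y ∈ S(x)}`. -/
def pesValo (F f : PairSp n m → ℝ) (Θ₂ : Set (PairSp n m)) (ϑ₂ : PairSp n m → Euc p)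
    (Λ₂ : Set (Euc p)) (x : Euc n) : ℝ :=
  sInf ((fun y => -F (l2pair x y)) '' Smap f Θ₂ ϑ₂ Λ₂ x)

/-- Pessimistic two-level value function `φ_p = -φ_p^o`. -/
def pesVal (F f : PairSp n m → ℝ) (Θ₂ : Set (PairSp n m)) (ϑ₂ : PairSp n m → Euc p)
    (Λ₂ : Set (Euc p)) (x : Euc n) : ℝ :=
  -(pesValo F f Θ₂ ϑ₂ Λ₂ x)

/-- Pessimistic solution map `S_o^p`. -/
def Spomap (F f : PairSp n m → ℝ) (Θ₂ : Set (PairSp n m)) (ϑ₂ : PairSp n m → Euc p)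
    (Λ₂ : Set (Euc p)) (x : Euc n) : Set (Euc m) :=
  {y | y ∈ Smap f Θ₂ ϑ₂ Λ₂ x ∧ 0 ≤ F (l2pair x y) + pesValo F f Θ₂ ϑ₂ Λ₂ x}

/-- The perturbation map `Φ^K`. -/
def PhiK (Θ₂ : Set (PairSp n m)) (ϑ₂ : PairSp n m → Euc p) (Λ₂ : Set (Euc p)) (u : Euc p) :
    Set (PairSp n m) :=
  {z | z ∈ Θ₂ ∧ ϑ₂ z + u ∈ Λ₂}

/-- The perturbation map `Φ^S`. -/
def PhiS (f : PairSp n m → ℝ) (Θ₂ : Set (PairSp n m)) (ϑ₂ : PairSp n m → Euc p)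
    (Λ₂ : Set (Euc p)) (u : ℝ) : Set (PairSp n m) :=
  {z | z ∈ Θ₂ ∧ ϑ₂ z ∈ Λ₂ ∧ f z - lowVal f Θ₂ ϑ₂ Λ₂ (l2fst z) + u ≤ 0}

/-- The upper-level perturbation map `Φ^X`. -/
def PhiX (Θ₁ : Set (Euc n)) (ϑ₁ : Euc n → Euc k) (Λ₁ : Set (Euc k)) (u : Euc k) :
    Set (Euc n) :=
  {x | x ∈ Θ₁ ∧ ϑ₁ x + u ∈ Λ₁}

/-- Constraint qualification (CQ-K) at a point. -/
def CQK (Θ₂ : Set (PairSp n m)) (ϑ₂ : PairSp n m → Euc p) (Λ₂ : Set (Euc p))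
    (z₀ : PairSp n m) : Prop :=
  ∀ (xs : Euc n) (u : Euc p), u ∈ limNC Λ₂ (ϑ₂ z₀) →
    l2pair xs (0 : Euc m) ∈ limSD (fun z => (inner ℝ u (ϑ₂ z) : ℝ)) z₀ + limNC Θ₂ z₀ →
    xs = 0

/-- Constraint qualification (CQ-S) at a point. -/
def CQS (f : PairSp n m → ℝ) (Θ₂ : Set (PairSp n m)) (ϑ₂ : PairSp n m → Euc p)
    (Λ₂ : Set (Euc p)) (z₀ : PairSp n m) : Prop :=
  ∀ (xs : Euc n) (r : ℝ) (u : Euc p), 0 ≤ r → u ∈ limNC Λ₂ (ϑ₂ z₀) →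
    l2pair xs (0 : Euc m) ∈
      r • limSD (fun z => f z - lowVal f Θ₂ ϑ₂ Λ₂ (l2fst z)) z₀ +
        limSD (fun z => (inner ℝ u (ϑ₂ z) : ℝ)) z₀ + limNC Θ₂ z₀ →
    xs = 0

/-- Generalized Mangasarian–Fromovitz constraint qualification (GMFCQ). -/
def GMFCQ (g : PairSp n m → Euc p) (z₀ : PairSp n m) : Prop :=
  ∀ γ : Fin p → ℝ, (∀ i, 0 ≤ γ i) → (∀ i, γ i * g z₀ i = 0) →
    (0 : PairSp n m) ∈ ∑ i : Fin p, γ i • clarkeSD (fun z => g z i) z₀ →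
    ∀ i, γ i = 0

end

noncomputable section
section AuxLemmas
open Filter Topology Set
set_option linter.unusedSectionVars false

variable {E : Type*} [NormedAddCommGroup E] [InnerProductSpace ℝ E]

local notation "⟪" x ", " y "⟫" => @inner ℝ _ _ x y

/-- proximal inequality over a convex subset containing the projection point -/
lemma proj_convex_ineq {Θ Θ' : Set E} (hsub : Θ' ⊆ Θ) (hconv : Convex ℝ Θ')
    {x w : E} (hw : w ∈ projSet Θ x) (hw' : w ∈ Θ') :
    ∀ c ∈ Θ', ⟪x - w, c - w⟫ ≤ 0 := by
  intro c hc
  have key : ∀ τ : ℝ, 0 < τ → τ ≤ 1 → ⟪x - w, c - w⟫ ≤ τ / 2 * ‖c - w‖ ^ 2 := by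
    intro τ hτ0 hτ1
    have hmem : w + τ • (c - w) ∈ Θ' := by
      have := hconv hw' hc (a := 1 - τ) (b := τ) (by linarith) hτ0.le (by ring)
      convert this using 1
      module
    have hle : ‖x - w‖ ≤ ‖x - (w + τ • (c - w))‖ := by
      rw [← dist_eq_norm, ← dist_eq_norm, hw.2]
      exact Metric.infDist_le_dist_of_mem (hsub hmem)
    have hsq : ‖x - w‖ ^ 2 ≤ ‖x - w - τ • (c - w)‖ ^ 2 := by
      have h1 : x - (w + τ • (c - w)) = x - w - τ • (c - w) := by abel
      rw [← h1]
      exact pow_le_pow_left₀ (norm_nonneg _) hle 2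
    have expand : ‖x - w - τ • (c - w)‖ ^ 2
        = ‖x - w‖^2 - 2 * (τ * ⟪x - w, c - w⟫) + τ^2 * ‖c - w‖^2 := by
      rw [norm_sub_sq_real, real_inner_smul_right, norm_smul, Real.norm_eq_abs, mul_pow, sq_abs]
    rw [expand] at hsq
    nlinarith
  rcases eq_or_ne c w with rfl | hne
  · simp
  · by_contra h
    push_neg at h
    have hne' : c - w ≠ 0 := sub_ne_zero.mpr hne
    have hcw : 0 < ‖c - w‖ ^ 2 := pow_pos (norm_pos_iff.mpr hne') 2
    set δ := ⟪x - w, c - w⟫ with hδ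
    have hδ0 : 0 < δ := h
    set τ := min 1 (δ / ‖c - w‖ ^ 2) with hτ
    have hτ0 : 0 < τ := lt_min one_pos (div_pos hδ0 hcw)
    have := key τ hτ0 (min_le_left _ _)
    have h3 : τ / 2 * ‖c - w‖ ^ 2 ≤ δ / 2 := by
      have : τ ≤ δ / ‖c - w‖ ^ 2 := min_le_right _ _
      rw [div_mul_eq_mul_div, div_le_div_iff₀ two_pos two_pos]
      calc τ * ‖c-w‖^2 * 2 ≤ (δ / ‖c-w‖^2) * ‖c-w‖^2 * 2 := by nlinarith
        _ = δ * 2 := by field_simp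
    linarith

/-- projections converge when base points converge to a point of Θ -/
lemma proj_tendsto {Θ : Set E} {x₀ : E} (hx₀ : x₀ ∈ Θ) {x w : ℕ → E}
    (hw : ∀ j, w j ∈ projSet Θ (x j)) (hx : Tendsto x atTop (𝓝 x₀)) :
    Tendsto w atTop (𝓝 x₀) := by
  have hdist : Tendsto (fun j => dist (x j) x₀) atTop (𝓝 0) :=
    tendsto_iff_dist_tendsto_zero.mp hx
  have hle : ∀ j, dist (w j) x₀ ≤ 2 * dist (x j) x₀ := by
    intro j
    have h1 : dist (x j) (w j) ≤ dist (x j) x₀ := by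
      rw [(hw j).2]; exact Metric.infDist_le_dist_of_mem hx₀
    calc dist (w j) x₀ ≤ dist (w j) (x j) + dist (x j) x₀ := dist_triangle _ _ _
      _ = dist (x j) (w j) + dist (x j) x₀ := by rw [dist_comm]
      _ ≤ 2 * dist (x j) x₀ := by linarith
  refine tendsto_iff_dist_tendsto_zero.mpr ?_
  refine squeeze_zero (fun j => dist_nonneg) hle ?_
  simpa using hdist.const_mul 2

lemma limNC_convex {Θ : Set E} (hΘ : Convex ℝ Θ) {x₀ : E} (hx₀ : x₀ ∈ Θ) {v : E}
    (hv : v ∈ limNC Θ x₀) : ∀ c ∈ Θ, ⟪v, c - x₀⟫ ≤ 0 := by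
  obtain ⟨x, w, a, hw, ha, hx, hlim⟩ := hv
  intro c hc
  have hwt : Tendsto w atTop (𝓝 x₀) := proj_tendsto hx₀ hw hx
  have hj : ∀ j, ⟪a j • (x j - w j), c - w j⟫ ≤ 0 := by
    intro j
    rw [real_inner_smul_left]
    exact mul_nonpos_of_nonneg_of_nonpos (ha j)
      (proj_convex_ineq subset_rfl hΘ (hw j) (hw j).1 c hc)
  have ht : Tendsto (fun j => ⟪a j • (x j - w j), c - w j⟫) atTop (𝓝 ⟪v, c - x₀⟫) :=
    hlim.inner (tendsto_const_nhds.sub hwt)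
  exact le_of_tendsto ht (Filter.Eventually.of_forall hj)

lemma limNC_univ {x₀ v : E} (hv : v ∈ limNC (Set.univ : Set E) x₀) : v = 0 := by
  obtain ⟨x, w, a, hw, ha, hx, hlim⟩ := hv
  have hwx : ∀ j, w j = x j := by
    intro j
    have h0 : Metric.infDist (x j) (Set.univ : Set E) = 0 := by
      have h1 : Metric.infDist (x j) (Set.univ : Set E) ≤ 0 := by
        have := Metric.infDist_le_dist_of_mem (s := (Set.univ : Set E)) (Set.mem_univ (x j)) (x := x j)
        simpa using this
      exact le_antisymm h1 Metric.infDist_nonneg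
    have := (hw j).2
    rw [h0] at this
    exact (dist_eq_zero.mp this).symm
  have : (fun j => a j • (x j - w j)) = fun _ => (0 : E) := by
    funext j; rw [hwx j]; simp
  rw [this] at hlim
  exact tendsto_nhds_unique hlim tendsto_const_nhds

/-- limiting subdifferential of convex function is contained in convex subdifferential -/
lemma limSD_convex_subset {ψ : E → ℝ} (hψ : ConvexOn ℝ Set.univ ψ) {z₀ : E} {ξ : E}
    (hξ : ξ ∈ limSD ψ z₀) : ∀ z, ψ z₀ + ⟪ξ, z - z₀⟫ ≤ ψ z := by
  intro z
  set Epi : Set (WithLp 2 (E × ℝ)) := {w | ψ (l2fst w) ≤ l2snd w} with hEpi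
  have hconv : Convex ℝ Epi := by
    intro w₁ h₁ w₂ h₂ a b ha hb hab
    have := hψ.2 (Set.mem_univ (l2fst w₁)) (Set.mem_univ (l2fst w₂)) ha hb hab
    simp only [hEpi, Set.mem_setOf_eq] at h₁ h₂ ⊢
    have hfst : l2fst (a • w₁ + b • w₂) = a • l2fst w₁ + b • l2fst w₂ := rfl
    have hsnd : l2snd (a • w₁ + b • w₂) = a * l2snd w₁ + b * l2snd w₂ := rfl
    rw [hfst, hsnd]
    calc ψ (a • l2fst w₁ + b • l2fst w₂) ≤ a • ψ (l2fst w₁) + b • ψ (l2fst w₂) := this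
      _ ≤ a * l2snd w₁ + b * l2snd w₂ := by
          simp only [smul_eq_mul]
          have := mul_le_mul_of_nonneg_left h₁ ha
          have := mul_le_mul_of_nonneg_left h₂ hb
          linarith
  have hx₀ : l2pair z₀ (ψ z₀) ∈ Epi := by
    simp only [hEpi, Set.mem_setOf_eq]
    exact le_refl _
  have hc : l2pair z (ψ z) ∈ Epi := by
    simp only [hEpi, Set.mem_setOf_eq]; exact le_refl _
  have := limNC_convex hconv hx₀ hξ _ hc
  have hinner : ⟪l2pair ξ (-1 : ℝ), l2pair z (ψ z) - l2pair z₀ (ψ z₀)⟫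
      = ⟪ξ, z - z₀⟫ + (-1) * (ψ z - ψ z₀) := by
    show ⟪ξ, z - z₀⟫ + (ψ z - ψ z₀) * star (-1:ℝ) = _
    rw [star_trivial]; ring
  rw [hinner] at this
  linarith

/-- existence of subgradients for finite-valued convex functions in finite dimensions -/
lemma exists_subgradient [FiniteDimensional ℝ E] {φ : E → ℝ} (hφ : ConvexOn ℝ Set.univ φ)
    (x' : E) : ∃ v : E, ∀ x, φ x' + ⟪v, x - x'⟫ ≤ φ x := by
  have hcont : Continuous φ := by
    exact continuousOn_univ.mp (hφ.continuousOn isOpen_univ)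
  set S : Set (E × ℝ) := {q | φ q.1 < q.2} with hS
  have hSopen : IsOpen S := isOpen_lt (hcont.comp continuous_fst) continuous_snd
  have hSconv : Convex ℝ S := by
    intro q₁ h₁ q₂ h₂ a b ha hb hab
    simp only [hS, Set.mem_setOf_eq] at h₁ h₂ ⊢
    have hcomb := hφ.2 (Set.mem_univ q₁.1) (Set.mem_univ q₂.1) ha hb hab
    have hsnd : (a • q₁ + b • q₂).2 = a * q₁.2 + b * q₂.2 := rfl
    have hfst : (a • q₁ + b • q₂).1 = a • q₁.1 + b • q₂.1 := rfl
    rw [hfst, hsnd]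
    rcases eq_or_lt_of_le ha with rfl | ha'
    · simp only [zero_add] at hab; subst hab; simpa using h₂
    · have h1 : a * φ q₁.1 < a * q₁.2 := by exact mul_lt_mul_of_pos_left h₁ ha'
      have h2 : b * φ q₂.1 ≤ b * q₂.2 := mul_le_mul_of_nonneg_left h₂.le hb
      calc φ (a • q₁.1 + b • q₂.1) ≤ a * φ q₁.1 + b * φ q₂.1 := hcomb
        _ < a * q₁.2 + b * q₂.2 := by linarith
  have hnot : ((x', φ x') : E × ℝ) ∉ S := by simp [hS]
  obtain ⟨L, hL⟩ := geometric_hahn_banach_open_point hSconv hSopen hnot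
  set β := L (0, 1) with hβdef
  have hLsplit : ∀ q : E × ℝ, L q = L (q.1, 0) + q.2 * β := by
    intro q
    have hq : (q.1, (0:ℝ)) + q.2 • ((0:E), (1:ℝ)) = q := by
      simp [Prod.ext_iff]
    conv_lhs => rw [← hq]
    rw [map_add, map_smul, smul_eq_mul]
  have hβ : β < 0 := by
    have h1 := hL (x', φ x' + 1) (by simp [hS])
    rw [hLsplit (x', φ x' + 1), hLsplit (x', φ x')] at h1
    simp only [Prod.fst, Prod.snd] at h1
    nlinarith
  have hkey : ∀ x, L (x, 0) + φ x * β ≤ L (x', 0) + φ x' * β := by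
    intro x
    have h2 : ∀ ε : ℝ, 0 < ε → L (x, 0) + (φ x + ε) * β < L (x', 0) + φ x' * β := by
      intro ε hε
      have := hL (x, φ x + ε) (by simp [hS, hε])
      rw [hLsplit (x, φ x + ε), hLsplit (x', φ x')] at this
      exact this
    by_contra hcon
    push_neg at hcon
    set d := L (x, 0) + φ x * β - (L (x', 0) + φ x' * β) with hd
    have hd0 : 0 < d := by simp only [hd]; linarith
    have hβ' : (0:ℝ) < 2 * (-β) := by linarith
    have hβne : β ≠ 0 := by linarith
    have := h2 (d / (2 * (-β))) (div_pos hd0 hβ')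
    have hexp : (φ x + d / (2 * (-β))) * β = φ x * β - d / 2 := by
      field_simp
      ring
    rw [hexp] at this
    simp only [hd] at this
    linarith
  -- construct v
  set ℓ : E →L[ℝ] ℝ := (-β)⁻¹ • (L.comp (ContinuousLinearMap.inl ℝ E ℝ)) with hℓ
  set v := (InnerProductSpace.toDual ℝ E).symm ℓ with hv
  refine ⟨v, fun x => ?_⟩
  have hvx : ∀ y : E, ⟪v, y⟫ = (-β)⁻¹ * L (y, 0) := by
    intro y
    rw [hv, InnerProductSpace.toDual_symm_apply]
    simp [hℓ]
  rw [inner_sub_right, hvx, hvx]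
  have hβ' : 0 < -β := by linarith
  have hk := hkey x
  have h3 : (-β)⁻¹ * (L (x, 0) - L (x', 0)) ≤ φ x - φ x' := by
    rw [inv_mul_le_iff₀ hβ']
    nlinarith
  have h4 : (-β)⁻¹ * L (x, 0) - (-β)⁻¹ * L (x', 0) = (-β)⁻¹ * (L (x, 0) - L (x', 0)) := by ring
  linarith


section Achar
variable {E₁ E₂ : Type*} [NormedAddCommGroup E₁] [InnerProductSpace ℝ E₁]
  [FiniteDimensional ℝ E₁] [NormedAddCommGroup E₂] [InnerProductSpace ℝ E₂]

lemma continuous_l2fst {A B : Type*} [NormedAddCommGroup A] [NormedAddCommGroup B]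
    [NormedSpace ℝ A] [NormedSpace ℝ B] :
    Continuous (l2fst : WithLp 2 (A × B) → A) :=
  continuous_fst.comp (WithLp.prodContinuousLinearEquiv 2 ℝ A B).continuous

lemma continuous_l2snd {A B : Type*} [NormedAddCommGroup A] [NormedAddCommGroup B]
    [NormedSpace ℝ A] [NormedSpace ℝ B] :
    Continuous (l2snd : WithLp 2 (A × B) → B) :=
  continuous_snd.comp (WithLp.prodContinuousLinearEquiv 2 ℝ A B).continuous

lemma continuous_l2pair_right {A B : Type*} [NormedAddCommGroup A] [NormedAddCommGroup B]
    [NormedSpace ℝ A] [NormedSpace ℝ B] (z : A) :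
    Continuous (fun t : B => l2pair z t) :=
  (WithLp.prodContinuousLinearEquiv 2 ℝ A B).symm.continuous.comp
    (continuous_const.prodMk continuous_id)

theorem Achar {f : WithLp 2 (E₁ × E₂) → ℝ} {φ : E₁ → ℝ}
    (hf : ConvexOn ℝ Set.univ f) (hφ : ConvexOn ℝ Set.univ φ)
    {zb a : WithLp 2 (E₁ × E₂)}
    (ha : a ∈ limSD (fun z => f z - φ (l2fst z)) zb) :
    ∃ v : E₁, (∀ x, φ (l2fst zb) + ⟪v, x - l2fst zb⟫ ≤ φ x) ∧
      (∀ z, f zb + ⟪a + l2pair v (0 : E₂), z - zb⟫ ≤ f z) := by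
  classical
  obtain ⟨X, Ws, α, hW0, hα, hX0, hlim⟩ := ha
  set ψ : WithLp 2 (E₁ × E₂) → ℝ := fun z => f z - φ (l2fst z) with hψdef
  set Epi : Set (WithLp 2 (WithLp 2 (E₁ × E₂) × ℝ)) := {Z | ψ (l2fst Z) ≤ l2snd Z}
    with hEpidef
  set X₀ : WithLp 2 (WithLp 2 (E₁ × E₂) × ℝ) := l2pair zb (ψ zb) with hX₀def
  have hW : ∀ j, Ws j ∈ projSet Epi (X j) := hW0
  have hX : Tendsto X atTop (𝓝 X₀) := hX0
  have hX₀mem : X₀ ∈ Epi := le_refl (ψ zb)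
  have hWt : Tendsto Ws atTop (𝓝 X₀) := proj_tendsto hX₀mem hW hX
  set w : ℕ → WithLp 2 (E₁ × E₂) := fun j => l2fst (Ws j) with hwdef
  set t : ℕ → ℝ := fun j => l2snd (Ws j) with htdef
  set xw : ℕ → E₁ := fun j => l2fst (w j) with hxwdef
  set xb : E₁ := l2fst zb with hxb
  have hwt : Tendsto w atTop (𝓝 zb) := (continuous_l2fst.tendsto X₀).comp hWt
  have hxwt : Tendsto xw atTop (𝓝 xb) := (continuous_l2fst.tendsto zb).comp hwt
  -- subgradient selection
  have hsel : ∀ j, ∃ v : E₁, ∀ x, φ (xw j) + ⟪v, x - xw j⟫ ≤ φ x :=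
    fun j => exists_subgradient hφ (xw j)
  choose V hV using hsel
  have hφc : Continuous φ := continuousOn_univ.mp (hφ.continuousOn isOpen_univ)
  -- bound on subgradients
  obtain ⟨M, hM⟩ := (isCompact_closedBall xb 2).exists_bound_of_continuousOn hφc.continuousOn
  have hMbound : ∀ j, ‖xw j - xb‖ ≤ 1 → ‖V j‖ ≤ 2 * M := by
    intro j hj
    rcases eq_or_ne (V j) 0 with h0 | h0
    · rw [h0, norm_zero]
      have h1 := hM xb (Metric.mem_closedBall_self (by norm_num))
      have : (0:ℝ) ≤ M := le_trans (norm_nonneg _) h1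
      linarith
    · set h : E₁ := ‖V j‖⁻¹ • V j with hh
      have hnh : ‖h‖ = 1 := by
        rw [hh, norm_smul, norm_inv, norm_norm, inv_mul_cancel₀ (norm_ne_zero_iff.mpr h0)]
      have hin : ⟪V j, h⟫ = ‖V j‖ := by
        rw [hh, real_inner_smul_right, real_inner_self_eq_norm_sq]
        field_simp [norm_ne_zero_iff.mpr h0]
      have hsub := hV j (xw j + h)
      rw [add_sub_cancel_left, hin] at hsub
      have hmem1 : xw j ∈ Metric.closedBall xb 2 := by
        rw [Metric.mem_closedBall, dist_eq_norm]; linarith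
      have hmem2 : xw j + h ∈ Metric.closedBall xb 2 := by
        rw [Metric.mem_closedBall, dist_eq_norm]
        calc ‖xw j + h - xb‖ ≤ ‖xw j - xb‖ + ‖h‖ := by
              have heq : xw j + h - xb = (xw j - xb) + h := by abel
              rw [heq]; exact norm_add_le _ _
          _ ≤ 2 := by rw [hnh]; linarith
      have b1 := hM _ hmem1
      have b2 := hM _ hmem2
      rw [Real.norm_eq_abs] at b1 b2
      have hVle : ‖V j‖ ≤ φ (xw j + h) - φ (xw j) := by linarith
      calc ‖V j‖ ≤ φ (xw j + h) - φ (xw j) := hVle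
        _ ≤ 2 * M := by
          have := abs_le.mp b1
          have := abs_le.mp b2
          linarith
  -- eventual bound, shift, subsequence
  have hev : ∀ᶠ j in atTop, ‖xw j - xb‖ ≤ 1 := by
    have h1 : ∀ᶠ j in atTop, xw j ∈ Metric.closedBall xb 1 :=
      hxwt (Metric.closedBall_mem_nhds xb one_pos)
    filter_upwards [h1] with j hj
    rwa [Metric.mem_closedBall, dist_eq_norm] at hj
  obtain ⟨N, hN⟩ := eventually_atTop.mp hev
  have hbd : ∀ k : ℕ, V (k + N) ∈ Metric.closedBall (0:E₁) (2*M) := by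
    intro k
    rw [Metric.mem_closedBall, dist_zero_right]
    exact hMbound _ (hN _ (Nat.le_add_left N k))
  obtain ⟨v, -, σ, hσ, hVσ⟩ :=
    tendsto_subseq_of_bounded Metric.isBounded_closedBall hbd
  set τ : ℕ → ℕ := fun k => σ k + N with hτdef
  have hτmono : StrictMono τ := fun i j hij => by
    simp only [hτdef]; exact Nat.add_lt_add_right (hσ hij) N
  have hτtop : Tendsto τ atTop atTop := hτmono.tendsto_atTop
  have hVτ : Tendsto (fun k => V (τ k)) atTop (𝓝 v) := hVσ
  have hxwτ : Tendsto (fun k => xw (τ k)) atTop (𝓝 xb) := hxwt.comp hτtop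
  have hWτ : Tendsto (fun k => Ws (τ k)) atTop (𝓝 X₀) := hWt.comp hτtop
  have hlimτ : Tendsto (fun k => α (τ k) • (X (τ k) - Ws (τ k))) atTop
      (𝓝 (l2pair a (-1 : ℝ))) := hlim.comp hτtop
  -- v is a subgradient of φ at xb
  have hvsub : ∀ x, φ xb + ⟪v, x - xb⟫ ≤ φ x := by
    intro x
    have hle : ∀ k, φ (xw (τ k)) + ⟪V (τ k), x - xw (τ k)⟫ ≤ φ x :=
      fun k => hV (τ k) x
    have h1 : Tendsto (fun k => φ (xw (τ k)) + ⟪V (τ k), x - xw (τ k)⟫) atTop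
        (𝓝 (φ xb + ⟪v, x - xb⟫)) :=
      ((hφc.tendsto xb).comp hxwτ).add (hVτ.inner (tendsto_const_nhds.sub hxwτ))
    exact le_of_tendsto h1 (Eventually.of_forall hle)
  refine ⟨v, hvsub, ?_⟩
  intro z
  -- per-index convex majorant argument
  have hjineq : ∀ k, ⟪α (τ k) • (X (τ k) - Ws (τ k)),
      l2pair z (f z - φ (xw (τ k)) - ⟪V (τ k), l2fst z - xw (τ k)⟫) - Ws (τ k)⟫ ≤ 0 := by
    intro k
    set j := τ k with hjdef
    set Θj : Set (WithLp 2 (WithLp 2 (E₁ × E₂) × ℝ)) :=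
      {Z | f (l2fst Z) - φ (xw j) - ⟪V j, l2fst (l2fst Z) - xw j⟫ ≤ l2snd Z} with hΘdef
    have hsub : Θj ⊆ Epi := by
      intro Z hZ
      simp only [hΘdef, Set.mem_setOf_eq] at hZ
      have h1 := hV j (l2fst (l2fst Z))
      show ψ (l2fst Z) ≤ l2snd Z
      simp only [hψdef]
      linarith
    have hconv : Convex ℝ Θj := by
      intro Z₁ h₁ Z₂ h₂ c b hc hb hcb
      simp only [hΘdef, Set.mem_setOf_eq] at h₁ h₂ ⊢
      have hffst : l2fst (l2fst (c • Z₁ + b • Z₂))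
          = c • l2fst (l2fst Z₁) + b • l2fst (l2fst Z₂) := rfl
      have hfst : l2fst (c • Z₁ + b • Z₂) = c • l2fst Z₁ + b • l2fst Z₂ := rfl
      have hsnd : l2snd (c • Z₁ + b • Z₂) = c * l2snd Z₁ + b * l2snd Z₂ := rfl
      rw [hffst, hfst, hsnd]
      have hcomb := hf.2 (Set.mem_univ (l2fst Z₁)) (Set.mem_univ (l2fst Z₂)) hc hb hcb
      have hdecomp : c • l2fst (l2fst Z₁) + b • l2fst (l2fst Z₂) - xw j
          = c • (l2fst (l2fst Z₁) - xw j) + b • (l2fst (l2fst Z₂) - xw j) := by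
        have h5 : c • (l2fst (l2fst Z₁) - xw j) + b • (l2fst (l2fst Z₂) - xw j)
            = c • l2fst (l2fst Z₁) + b • l2fst (l2fst Z₂) - (c + b) • xw j := by
          module
        rw [h5, hcb, one_smul]
      rw [hdecomp, inner_add_right, real_inner_smul_right, real_inner_smul_right]
      have hc1 := mul_le_mul_of_nonneg_left h₁ hc
      have hb1 := mul_le_mul_of_nonneg_left h₂ hb
      have hφconst : φ (xw j) = c * φ (xw j) + b * φ (xw j) := by
        rw [← add_mul, hcb, one_mul]
      simp only [smul_eq_mul] at hcomb
      nlinarith [hcomb]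
    have hWmem : Ws j ∈ Θj := by
      simp only [hΘdef, Set.mem_setOf_eq]
      have h1 : (l2fst (l2fst (Ws j)) : E₁) - xw j = 0 := sub_self _
      rw [h1, inner_zero_right]
      have h2 : Ws j ∈ Epi := (hW j).1
      simp only [hEpidef, Set.mem_setOf_eq, hψdef] at h2
      linarith
    have hCmem : l2pair z (f z - φ (xw j) - ⟪V j, l2fst z - xw j⟫) ∈ Θj :=
      le_refl (f z - φ (xw j) - ⟪V j, l2fst z - xw j⟫)
    have hpi := proj_convex_ineq hsub hconv (hW j) hWmem _ hCmem
    rw [real_inner_smul_left]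
    exact mul_nonpos_of_nonneg_of_nonpos (hα j) hpi
  -- pass to the limit
  have hCt : Tendsto (fun k => l2pair z (f z - φ (xw (τ k)) - ⟪V (τ k), l2fst z - xw (τ k)⟫))
      atTop (𝓝 (l2pair z (f z - φ xb - ⟪v, l2fst z - xb⟫))) := by
    apply ((continuous_l2pair_right z).tendsto _).comp
    exact (tendsto_const_nhds.sub ((hφc.tendsto xb).comp hxwτ)).sub
      (hVτ.inner (tendsto_const_nhds.sub hxwτ))
  have hfinal : ⟪l2pair a (-1:ℝ), l2pair z (f z - φ xb - ⟪v, l2fst z - xb⟫) - X₀⟫ ≤ 0 := by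
    have h1 : Tendsto (fun k => ⟪α (τ k) • (X (τ k) - Ws (τ k)),
        l2pair z (f z - φ (xw (τ k)) - ⟪V (τ k), l2fst z - xw (τ k)⟫) - Ws (τ k)⟫) atTop
        (𝓝 ⟪l2pair a (-1:ℝ), l2pair z (f z - φ xb - ⟪v, l2fst z - xb⟫) - X₀⟫) :=
      hlimτ.inner (hCt.sub hWτ)
    exact le_of_tendsto h1 (Eventually.of_forall hjineq)
  have hexp : ⟪l2pair a (-1:ℝ), l2pair z (f z - φ xb - ⟪v, l2fst z - xb⟫) - X₀⟫
      = ⟪a, z - zb⟫ + (-1) * (f z - φ xb - ⟪v, l2fst z - xb⟫ - ψ zb) := by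
    show ⟪a, z - zb⟫ + (f z - φ xb - ⟪v, l2fst z - xb⟫ - ψ zb) * star (-1:ℝ) = _
    rw [star_trivial]; ring
  rw [hexp] at hfinal
  have hψzb : ψ zb = f zb - φ xb := rfl
  have hpairv : ⟪(l2pair v (0:E₂) : WithLp 2 (E₁ × E₂)), z - zb⟫ = ⟪v, l2fst z - xb⟫ := by
    have hzdec : z - zb = l2pair (l2fst z - xb) (l2snd z - l2snd zb) := rfl
    rw [hzdec]
    show ⟪v, l2fst z - xb⟫ + ⟪(0:E₂), l2snd z - l2snd zb⟫ = _
    rw [inner_zero_left, add_zero]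
  rw [inner_add_left, hpairv]
  linarith
end Achar


lemma subgrad_unique {ρ : E → ℝ} {x₀ : E} (hρ : DifferentiableAt ℝ ρ x₀) {t₁ t₂ : E}
    (h₁ : ∀ x, ρ x₀ + ⟪t₁, x - x₀⟫ ≤ ρ x) (h₂ : ∀ x, ρ x₀ + ⟪t₂, x - x₀⟫ ≤ ρ x) :
    t₁ = t₂ := by
  have key : ∀ t : E, (∀ x, ρ x₀ + ⟪t, x - x₀⟫ ≤ ρ x) →
      (innerSL ℝ t : E →L[ℝ] ℝ) = fderiv ℝ ρ x₀ := by
    intro t ht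
    have hdinner : DifferentiableAt ℝ (fun x : E => (⟪t, x⟫ : ℝ)) x₀ :=
      (innerSL ℝ t).differentiableAt
    have hmin : IsLocalMin (fun x => ρ x - ⟪t, x⟫) x₀ :=
      Filter.Eventually.of_forall fun x => by
        have h3 := ht x
        rw [inner_sub_right] at h3
        simp only
        linarith
    have h0 := hmin.fderiv_eq_zero
    rw [fderiv_fun_sub hρ hdinner] at h0
    have h4 : fderiv ℝ (fun x : E => (⟪t, x⟫ : ℝ)) x₀ = innerSL ℝ t :=
      (innerSL ℝ t).fderiv
    rw [h4] at h0
    exact (sub_eq_zero.mp h0).symm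
  have h12 := (key t₁ h₁).trans (key t₂ h₂).symm
  have hall : ∀ y, ⟪t₁, y⟫ = ⟪t₂, y⟫ := by
    intro y
    have := ContinuousLinearMap.ext_iff.mp h12 y
    simpa using this
  have h3 : ⟪t₁ - t₂, t₁ - t₂⟫ = 0 := by
    rw [inner_sub_left, hall (t₁ - t₂)]; ring
  exact sub_eq_zero.mp (inner_self_eq_zero.mp h3)

lemma euc_inner_sum {q : ℕ} (a b : EuclideanSpace ℝ (Fin q)) : ⟪a, b⟫ = ∑ i, a i * b i := by
  simp [PiLp.inner_apply, RCLike.inner_apply, conj_trivial, mul_comm]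

end AuxLemmas

end

section FinalProof
local notation "⟪" x ", " y "⟫" => @inner ℝ _ _ x y

/-- validity of the coderivative-based constraint qualification (CQ-S)
for fully convex smooth lower-level data with parameter-independent constraints. -/
theorem statement0 {n m p : ℕ} (f : PairSp n m → ℝ) (g : Euc m → Euc p)
    (xbar : Euc n) (ybar : Euc m)
    (hfconv : ConvexOn ℝ Set.univ f) (hfC1 : ContDiff ℝ 1 f)
    (hgconv : ∀ i, ConvexOn ℝ Set.univ (fun y => g y i)) (hgC1 : ContDiff ℝ 1 g)
    (hdom : (Kmap (Set.univ : Set (PairSp n m)) (fun z => g (l2snd z)) (negOrth p) xbar).Nonempty)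
    (hcalm : CalmAt (fun u : Euc p => {y : Euc m | ∀ i, g y i + u i ≤ 0}) 0 ybar) :
    CQS f Set.univ (fun z => g (l2snd z)) (negOrth p) (l2pair xbar ybar) := by
  intro xs r u hr hu hmem
  -- the feasible set Y
  set Y : Set (Euc m) := {y | ∀ i, g y i ≤ 0} with hYdef
  have hKeq : ∀ x : Euc n,
      Kmap (Set.univ : Set (PairSp n m)) (fun z => g (l2snd z)) (negOrth p) x = Y := by
    intro x
    ext y
    simp only [Kmap, negOrth, Set.mem_setOf_eq, Set.mem_univ, true_and, hYdef]
    exact Iff.rfl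
  have hYne : Y.Nonempty := by rw [← hKeq xbar]; exact hdom
  have hYconv : Convex ℝ Y := by
    intro y₁ h₁ y₂ h₂ c d hc hd hcd
    have h₁' : ∀ i, g y₁ i ≤ 0 := h₁
    have h₂' : ∀ i, g y₂ i ≤ 0 := h₂
    show ∀ i, g (c • y₁ + d • y₂) i ≤ 0
    intro i
    have hcomb := (hgconv i).2 (Set.mem_univ y₁) (Set.mem_univ y₂) hc hd hcd
    simp only [smul_eq_mul] at hcomb
    have ha1 := mul_nonpos_of_nonneg_of_nonpos hc (h₁' i)
    have ha2 := mul_nonpos_of_nonneg_of_nonpos hd (h₂' i)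
    calc g (c • y₁ + d • y₂) i ≤ c * g y₁ i + d * g y₂ i := hcomb
      _ ≤ 0 := by linarith
  -- the value function
  set φ : Euc n → ℝ := lowVal f Set.univ (fun z => g (l2snd z)) (negOrth p) with hφdef
  have hφx : ∀ x, φ x = sInf ((fun y => f (l2pair x y)) '' Y) := by
    intro x
    rw [hφdef]
    unfold lowVal
    rw [hKeq]
  -- convexity of the value function
  have hφconv : ConvexOn ℝ Set.univ φ := by
    by_cases hB : ∀ x : Euc n, BddBelow ((fun y => f (l2pair x y)) '' Y)
    · refine ⟨convex_univ, ?_⟩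
      intro x₁ _ x₂ _ c d hc hd hcd
      simp only [hφx, smul_eq_mul]
      apply le_of_forall_pos_le_add
      intro ε hε
      obtain ⟨w₁, hw₁s, hw₁lt⟩ := Real.lt_sInf_add_pos (hYne.image (fun y => f (l2pair x₁ y))) hε
      obtain ⟨y₁, hy₁, rfl⟩ := hw₁s
      obtain ⟨w₂, hw₂s, hw₂lt⟩ := Real.lt_sInf_add_pos (hYne.image (fun y => f (l2pair x₂ y))) hε
      obtain ⟨y₂, hy₂, rfl⟩ := hw₂s
      have hyY : c • y₁ + d • y₂ ∈ Y := hYconv hy₁ hy₂ hc hd hcd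
      have hle : sInf ((fun y => f (l2pair (c • x₁ + d • x₂) y)) '' Y)
          ≤ f (l2pair (c • x₁ + d • x₂) (c • y₁ + d • y₂)) := csInf_le (hB _) ⟨_, hyY, rfl⟩
      have hpair : l2pair (c • x₁ + d • x₂) (c • y₁ + d • y₂)
          = c • l2pair x₁ y₁ + d • l2pair x₂ y₂ := rfl
      have hconv2 := hfconv.2 (Set.mem_univ (l2pair x₁ y₁)) (Set.mem_univ (l2pair x₂ y₂)) hc hd hcd
      simp only [smul_eq_mul] at hconv2
      rw [hpair] at hle
      have hm1 := mul_le_mul_of_nonneg_left hw₁lt.le hc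
      have hm2 := mul_le_mul_of_nonneg_left hw₂lt.le hd
      calc sInf ((fun y => f (l2pair (c • x₁ + d • x₂) y)) '' Y)
          ≤ c * f (l2pair x₁ y₁) + d * f (l2pair x₂ y₂) := le_trans hle hconv2
        _ ≤ c * (sInf ((fun y => f (l2pair x₁ y)) '' Y) + ε)
            + d * (sInf ((fun y => f (l2pair x₂ y)) '' Y) + ε) := by linarith
        _ = c * sInf ((fun y => f (l2pair x₁ y)) '' Y)
            + d * sInf ((fun y => f (l2pair x₂ y)) '' Y) + (c + d) * ε := by ring
        _ = c * sInf ((fun y => f (l2pair x₁ y)) '' Y)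
            + d * sInf ((fun y => f (l2pair x₂ y)) '' Y) + ε := by rw [hcd, one_mul]
    · push_neg at hB
      obtain ⟨x₀, hx₀⟩ := hB
      have hall : ∀ x : Euc n, ¬ BddBelow ((fun y => f (l2pair x y)) '' Y) := by
        intro x
        rw [not_bddBelow_iff] at hx₀ ⊢
        intro cc
        obtain ⟨y₁, hy₁⟩ := hYne
        set x₂ : Euc n := (2:ℝ) • x - x₀ with hx₂
        set C : ℝ := f (l2pair x₂ y₁) with hC
        obtain ⟨w, hws, hwlt⟩ := hx₀ (2 * cc - C)
        obtain ⟨y₀, hy₀Y, rfl⟩ := hws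
        have hyY : (1/2:ℝ) • y₀ + (1/2:ℝ) • y₁ ∈ Y :=
          hYconv hy₀Y hy₁ (by norm_num) (by norm_num) (by norm_num)
        refine ⟨f (l2pair x ((1/2:ℝ) • y₀ + (1/2:ℝ) • y₁)), ⟨_, hyY, rfl⟩, ?_⟩
        have hxdec : x = (1/2:ℝ) • x₀ + (1/2:ℝ) • x₂ := by rw [hx₂]; module
        have hpair : l2pair x ((1/2:ℝ) • y₀ + (1/2:ℝ) • y₁)
            = (1/2:ℝ) • l2pair x₀ y₀ + (1/2:ℝ) • l2pair x₂ y₁ := by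
          conv_lhs => rw [hxdec]
          rfl
        have hconv2 := hfconv.2 (Set.mem_univ (l2pair x₀ y₀)) (Set.mem_univ (l2pair x₂ y₁))
          (by norm_num : (0:ℝ) ≤ 1/2) (by norm_num : (0:ℝ) ≤ 1/2) (by norm_num : (1/2:ℝ) + 1/2 = 1)
        simp only [smul_eq_mul] at hconv2
        rw [hpair]
        calc f ((1/2:ℝ) • l2pair x₀ y₀ + (1/2:ℝ) • l2pair x₂ y₁)
            ≤ 1/2 * f (l2pair x₀ y₀) + 1/2 * f (l2pair x₂ y₁) := hconv2
          _ < cc := by rw [← hC]; linarith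
      have hzero : φ = fun _ => 0 := by
        funext x
        rw [hφx, csInf_of_not_bddBelow (hall x), Real.sInf_empty]
      rw [hzero]
      exact convexOn_const 0 convex_univ
  -- facts about u and the normal cone to the orthant
  have hnegconv : Convex ℝ (negOrth p) := by
    intro z₁ h₁ z₂ h₂ c d hc hd hcd
    have h₁' : ∀ i, z₁ i ≤ 0 := h₁
    have h₂' : ∀ i, z₂ i ≤ 0 := h₂
    show ∀ i, (c • z₁ + d • z₂) i ≤ 0
    intro i
    have heval : (c • z₁ + d • z₂) i = c * z₁ i + d * z₂ i := rfl
    rw [heval]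
    have ha1 := mul_nonpos_of_nonneg_of_nonpos hc (h₁' i)
    have ha2 := mul_nonpos_of_nonneg_of_nonpos hd (h₂' i)
    linarith
  have hgybar : g ybar ∈ negOrth p := by
    have h1 := hcalm.1
    show ∀ i, g ybar i ≤ 0
    intro i
    have h2 : g ybar i + (0 : Euc p) i ≤ 0 := h1 i
    simpa using h2
  have hgybar' : ∀ i, g ybar i ≤ 0 := hgybar
  have hybarY : ybar ∈ Y := hgybar
  have hucone : ∀ cv ∈ negOrth p, ⟪u, cv - g ybar⟫ ≤ 0 := limNC_convex hnegconv hgybar hu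
  have hupos : ∀ i, 0 ≤ u i := by
    intro i
    have hmem1 : g ybar - EuclideanSpace.single i (1:ℝ) ∈ negOrth p := by
      show ∀ j, (g ybar - EuclideanSpace.single i (1:ℝ)) j ≤ 0
      intro j
      have h1 : (g ybar - EuclideanSpace.single i (1:ℝ)) j
          = g ybar j - EuclideanSpace.single i (1:ℝ) j := rfl
      rw [h1]
      have h2 : (0:ℝ) ≤ EuclideanSpace.single i (1:ℝ) j := by
        rw [EuclideanSpace.single_apply]
        split <;> norm_num
      have h3 := hgybar' j
      linarith
    have h4 := hucone _ hmem1
    have h5 : g ybar - EuclideanSpace.single i (1:ℝ) - g ybar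
        = -EuclideanSpace.single i (1:ℝ) := by abel
    rw [h5, inner_neg_right] at h4
    have h6 : ⟪u, EuclideanSpace.single i (1:ℝ)⟫ = u i := by
      rw [euc_inner_sum]
      simp [EuclideanSpace.single_apply]
    rw [h6] at h4
    linarith
  have hneg_y : ∀ y ∈ Y, ⟪u, g y⟫ ≤ 0 := by
    intro y hy
    have hy' : ∀ i, g y i ≤ 0 := hy
    rw [euc_inner_sum]
    apply Finset.sum_nonpos
    intro i _
    exact mul_nonpos_of_nonneg_of_nonpos (hupos i) (hy' i)
  have hugy0 : ⟪u, g ybar⟫ = 0 := by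
    have h1 : ⟪u, g ybar⟫ ≤ 0 := hneg_y ybar hybarY
    have hmem0 : (0 : Euc p) ∈ negOrth p := fun i => le_refl 0
    have h2 := hucone 0 hmem0
    rw [zero_sub, inner_neg_right] at h2
    linarith
  -- convexity of the scalarized constraint function
  have hχconv : ConvexOn ℝ Set.univ (fun z : PairSp n m => (⟪u, g (l2snd z)⟫ : ℝ)) := by
    refine ⟨convex_univ, ?_⟩
    intro z₁ _ z₂ _ c d hc hd hcd
    have hsnd : l2snd (c • z₁ + d • z₂) = c • l2snd z₁ + d • l2snd z₂ := rfl
    simp only [hsnd, smul_eq_mul]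
    rw [euc_inner_sum, euc_inner_sum, euc_inner_sum]
    rw [Finset.mul_sum, Finset.mul_sum, ← Finset.sum_add_distrib]
    apply Finset.sum_le_sum
    intro i _
    have hgc := (hgconv i).2 (Set.mem_univ (l2snd z₁)) (Set.mem_univ (l2snd z₂)) hc hd hcd
    simp only [smul_eq_mul] at hgc
    calc u i * g (c • l2snd z₁ + d • l2snd z₂) i
        ≤ u i * (c * g (l2snd z₁) i + d * g (l2snd z₂) i) :=
          mul_le_mul_of_nonneg_left hgc (hupos i)
      _ = c * (u i * g (l2snd z₁) i) + d * (u i * g (l2snd z₂) i) := by ring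
  -- decompose the membership hypothesis
  obtain ⟨pq, hpq, cv, hcv, heq⟩ := Set.mem_add.mp hmem
  obtain ⟨ra, hra, b, hbB, heq2⟩ := Set.mem_add.mp hpq
  obtain ⟨a, haA, rfl⟩ := Set.mem_smul_set.mp hra
  have hc0 : cv = 0 := limNC_univ hcv
  rw [← heq2, hc0, add_zero] at heq
  have hxseq : r • l2fst a + l2fst b = xs := congrArg l2fst heq
  have hyseq : r • l2snd a + l2snd b = (0 : Euc m) := congrArg l2snd heq
  -- properties of b
  have hbsub : ∀ z, (⟪u, g (l2snd (l2pair xbar ybar))⟫ : ℝ)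
      + ⟪b, z - l2pair xbar ybar⟫ ≤ ⟪u, g (l2snd z)⟫ := limSD_convex_subset hχconv hbB
  have hbx : l2fst b = 0 := by
    have h1 : ∀ x : Euc n, ⟪l2fst b, x - xbar⟫ ≤ 0 := by
      intro x
      have h2 : (⟪u, g ybar⟫ : ℝ) + ⟪b, l2pair x ybar - l2pair xbar ybar⟫ ≤ ⟪u, g ybar⟫ :=
        hbsub (l2pair x ybar)
      have h3 : ⟪b, l2pair x ybar - l2pair xbar ybar⟫
          = ⟪l2fst b, x - xbar⟫ + ⟪l2snd b, ybar - ybar⟫ := rfl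
      rw [h3, sub_self, inner_zero_right, add_zero] at h2
      linarith
    have h5 := h1 (xbar + l2fst b)
    rw [add_sub_cancel_left] at h5
    exact real_inner_self_nonpos.mp h5
  have hby : ∀ y : Euc m, ⟪l2snd b, y - ybar⟫ ≤ ⟪u, g y⟫ := by
    intro y
    have h2 : (⟪u, g ybar⟫ : ℝ) + ⟪b, l2pair xbar y - l2pair xbar ybar⟫ ≤ ⟪u, g y⟫ :=
      hbsub (l2pair xbar y)
    have h3 : ⟪b, l2pair xbar y - l2pair xbar ybar⟫
        = ⟪l2fst b, xbar - xbar⟫ + ⟪l2snd b, y - ybar⟫ := rfl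
    rw [h3, sub_self, inner_zero_right, zero_add] at h2
    linarith
  -- case split on r
  rcases hr.eq_or_lt with hr0 | hrpos
  · subst hr0
    rw [zero_smul, zero_add, hbx] at hxseq
    exact hxseq.symm
  · -- main case : r > 0
    obtain ⟨v, hvsub0, hfa⟩ := Achar hfconv hφconv haA
    have hvsub : ∀ x, φ xbar + ⟪v, x - xbar⟫ ≤ φ x := hvsub0
    set sx : Euc n := l2fst a + v with hsx
    have hfa' : ∀ x y, f (l2pair xbar ybar) + ⟪sx, x - xbar⟫ + ⟪l2snd a, y - ybar⟫
        ≤ f (l2pair x y) := by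
      intro x y
      have h1 : f (l2pair xbar ybar)
          + ⟪a + l2pair v (0 : Euc m), l2pair x y - l2pair xbar ybar⟫ ≤ f (l2pair x y) :=
        hfa (l2pair x y)
      have h2 : ⟪a + l2pair v (0 : Euc m), l2pair x y - l2pair xbar ybar⟫
          = (⟪l2fst a + v, x - xbar⟫ + ⟪l2snd a + 0, y - ybar⟫ : ℝ) := rfl
      rw [h2, add_zero (l2snd a)] at h1
      linarith
    have hsgn : ∀ y ∈ Y, (0:ℝ) ≤ ⟪l2snd a, y - ybar⟫ := by
      intro y hy
      have h5 : r • l2snd a = -l2snd b := eq_neg_of_add_eq_zero_left hyseq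
      have h4 : r * ⟪l2snd a, y - ybar⟫ = -⟪l2snd b, y - ybar⟫ := by
        rw [← real_inner_smul_left, h5, inner_neg_left]
      have h6 : ⟪l2snd b, y - ybar⟫ ≤ 0 := le_trans (hby y) (hneg_y y hy)
      nlinarith [hrpos]
    have hlag : ∀ x, ∀ y ∈ Y, f (l2pair xbar ybar) + ⟪sx, x - xbar⟫ ≤ f (l2pair x y) := by
      intro x y hy
      have h1 := hfa' x y
      have h2 := hsgn y hy
      linarith
    have hbdd : ∀ x, BddBelow ((fun y => f (l2pair x y)) '' Y) := by
      intro x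
      refine ⟨f (l2pair xbar ybar) + ⟪sx, x - xbar⟫, ?_⟩
      rintro w ⟨y, hy, rfl⟩
      exact hlag x y hy
    have hφge : ∀ x, f (l2pair xbar ybar) + ⟪sx, x - xbar⟫ ≤ φ x := by
      intro x
      rw [hφx]
      refine le_csInf (hYne.image _) ?_
      rintro w ⟨y, hy, rfl⟩
      exact hlag x y hy
    have hφle : ∀ x, ∀ y ∈ Y, φ x ≤ f (l2pair x y) := by
      intro x y hy
      rw [hφx]
      exact csInf_le (hbdd x) ⟨y, hy, rfl⟩
    have hφxbar : φ xbar = f (l2pair xbar ybar) := by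
      apply le_antisymm (hφle xbar ybar hybarY)
      have h1 := hφge xbar
      rw [sub_self, inner_zero_right, add_zero] at h1
      exact h1
    have hsxsub : ∀ x, φ xbar + ⟪sx, x - xbar⟫ ≤ φ x := by
      intro x
      rw [hφxbar]
      exact hφge x
    -- differentiability of the reduced objective
    set J : Euc n →L[ℝ] PairSp n m :=
      ((WithLp.prodContinuousLinearEquiv 2 ℝ (Euc n) (Euc m)).symm.toContinuousLinearMap).comp
        (ContinuousLinearMap.inl ℝ (Euc n) (Euc m)) with hJ
    have hρdiff : DifferentiableAt ℝ (fun x : Euc n => f (l2pair x ybar)) xbar := by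
      have hJeq : (fun x : Euc n => f (l2pair x ybar))
          = fun x => f (J x + l2pair 0 ybar) := by
        funext x
        congr 1
        show l2pair x ybar = l2pair (x + 0) (0 + ybar)
        rw [add_zero, zero_add]
      rw [hJeq]
      exact ((hfC1.differentiable one_ne_zero).comp
        (J.differentiable.add_const (l2pair 0 ybar))).differentiableAt
    have hρv : ∀ x, f (l2pair xbar ybar) + ⟪v, x - xbar⟫ ≤ f (l2pair x ybar) := by
      intro x
      have h1 := hvsub x
      have h2 := hφle x ybar hybarY
      rw [hφxbar] at h1
      linarith
    have hρsx : ∀ x, f (l2pair xbar ybar) + ⟪sx, x - xbar⟫ ≤ f (l2pair x ybar) := by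
      intro x
      have h1 := hsxsub x
      have h2 := hφle x ybar hybarY
      rw [hφxbar] at h1
      linarith
    have hveq : v = sx := subgrad_unique hρdiff hρv hρsx
    have hax : l2fst a = 0 := by
      rw [hsx] at hveq
      exact add_eq_right.mp hveq.symm
    rw [hax, hbx, smul_zero, add_zero] at hxseq
    exact hxseq.symm


end FinalProof
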